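/- Let d ≥ 3 and let f̃ be a probability density on ℝ^d with finite Fisher information I(f̃). Then ∫_{ℝ^d} |y|^{−2} f̃(y) dy ≤ (d−2)^{−2} I(f̃). -/

import Mathlib

/-!
With `ρ x = ‖x‖² + ε²`, integrating the divergence of the vector field `x ↦ (f x / ρ x) • x`
over the whole space gives
`-∫ ∇f(x)·x / ρ = d ∫ f / ρ - 2 ∫ f ‖x‖² / ρ² ≥ (d - 2) ∫ f / ρ`.
Young's inequality with weight `d - 2` bounds the left side by
`I(f) / (2 (d - 2)) + (d - 2) / 2 · ∫ f / ρ`, and absorbing the last term gives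
`∫ f / ρ ≤ (d - 2)⁻² I(f)` uniformly in `ε`; Fatou's lemma lets `ε → 0`.
For `ε > 0` the field and its derivative are dominated by `f` and `‖∇f‖`, which are integrable
(the latter by `‖∇f‖ ≤ (‖∇f‖² / f + f) / 2`), so the divergence integral vanishes by integration
by parts, with no decay assumption on `f`.
-/

open MeasureTheory Filter Topology Module

theorem div_sq_add_sq_le {ε : ℝ} (hε : 0 < ε) (r : ℝ) : r / (r ^ 2 + ε ^ 2) ≤ (2 * ε)⁻¹ := by
  rw [div_le_iff₀ (by positivity), ← div_eq_inv_mul, le_div_iff₀ (by positivity)]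
  nlinarith [sq_nonneg (r - ε)]

theorem sq_div_sq_add_sq_le_one (r ε : ℝ) : r ^ 2 / (r ^ 2 + ε ^ 2) ≤ 1 :=
  div_le_one_of_le₀ (le_add_of_nonneg_right (sq_nonneg ε)) (by positivity)

theorem integral_le_of_tendsto_of_integral_le {α : Type*} [MeasurableSpace α] {μ : Measure α}
    {g : ℕ → α → ℝ} {G : α → ℝ} {K : ℝ} (hg_nonneg : ∀ n, 0 ≤ᵐ[μ] g n)
    (hg_int : ∀ n, Integrable (g n) μ)
    (hlim : ∀ᵐ x ∂μ, Tendsto (fun n => g n x) atTop (𝓝 (G x)))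
    (hK : ∀ n, ∫ x, g n x ∂μ ≤ K) : ∫ x, G x ∂μ ≤ K := by
  have hK0 : 0 ≤ K := (integral_nonneg_of_ae (hg_nonneg 0)).trans (hK 0)
  have hG_nonneg : 0 ≤ᵐ[μ] G := by
    filter_upwards [hlim, ae_all_iff.2 hg_nonneg] with x hx hx0
    exact ge_of_tendsto' hx hx0
  have hG_meas : AEStronglyMeasurable G μ :=
    aestronglyMeasurable_of_tendsto_ae _ (fun n => (hg_int n).aestronglyMeasurable) hlim
  rw [integral_eq_lintegral_of_nonneg_ae hG_nonneg hG_meas]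
  refine ENNReal.toReal_le_of_le_ofReal hK0 ?_
  calc ∫⁻ x, ENNReal.ofReal (G x) ∂μ
      = ∫⁻ x, liminf (fun n => ENNReal.ofReal (g n x)) atTop ∂μ := by
        refine lintegral_congr_ae ?_
        filter_upwards [hlim] with x hx
        exact ((ENNReal.continuous_ofReal.tendsto _).comp hx).liminf_eq.symm
    _ ≤ liminf (fun n => ∫⁻ x, ENNReal.ofReal (g n x) ∂μ) atTop :=
        lintegral_liminf_le' fun n => (hg_int n).aemeasurable.ennreal_ofReal
    _ ≤ ENNReal.ofReal K := by
        refine liminf_le_of_frequently_le' (Frequently.of_forall fun n => ?_)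
        rw [← ofReal_integral_eq_lintegral_ofReal (hg_int n) (hg_nonneg n)]
        exact ENNReal.ofReal_le_ofReal (hK n)

section Divergence

variable {E F : Type*} [NormedAddCommGroup E] [NormedSpace ℝ E] [FiniteDimensional ℝ E]
  [MeasurableSpace E] [BorelSpace E] {μ : Measure E}
  [NormedAddCommGroup F] [NormedSpace ℝ F]

theorem measurable_fderiv_apply_self (g : E → ℝ) : Measurable (fun x => fderiv ℝ g x x) :=
  isBoundedBilinearMap_apply.continuous.measurable.comp
    ((measurable_fderiv ℝ g).prodMk measurable_id)

variable [μ.IsAddHaarMeasure]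

theorem integral_fderiv_apply_eq_zero {g : E → F} (hg : Differentiable ℝ g)
    (hg_int : Integrable g μ) (v : E) (hg' : Integrable (fun x => fderiv ℝ g x v) μ) :
    ∫ x, fderiv ℝ g x v ∂μ = 0 := by
  simpa using integral_smul_fderiv_eq_neg_fderiv_smul_of_integrable (μ := μ)
    (f := fun _ : E => (1 : ℝ)) (g := g) (v := v) (by simp) (by simpa using hg')
    (by simpa using hg_int) (fun x _ => differentiableAt_const _) (fun x _ => hg x)

theorem integral_trace_fderiv_eq_zero {V : E → E} (hV : Differentiable ℝ V)
    (hV_int : Integrable V μ) (hV' : Integrable (fderiv ℝ V) μ) :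
    ∫ x, LinearMap.trace ℝ E (fderiv ℝ V x) ∂μ = 0 := by
  let trace : (E →L[ℝ] E) →L[ℝ] ℝ :=
    LinearMap.toContinuousLinearMap (LinearMap.trace ℝ E ∘ₗ ContinuousLinearMap.coeLM ℝ)
  have h0 : ∫ x, fderiv ℝ V x ∂μ = 0 := by
    ext v
    rw [ContinuousLinearMap.integral_apply hV' v]
    exact integral_fderiv_apply_eq_zero hV hV_int v
      ((ContinuousLinearMap.apply ℝ E v).integrable_comp hV')
  calc ∫ x, LinearMap.trace ℝ E (fderiv ℝ V x) ∂μ = ∫ x, trace (fderiv ℝ V x) ∂μ := rfl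
    _ = trace (∫ x, fderiv ℝ V x ∂μ) := trace.integral_comp_comm hV'
    _ = 0 := by rw [h0, map_zero]

theorem integral_fderiv_apply_self {g : E → ℝ} (hg : Differentiable ℝ g)
    (hg_int : Integrable g μ) (hgx : Integrable (fun x => g x • x) μ)
    (hg' : Integrable (fun x => ‖fderiv ℝ g x‖ * ‖x‖) μ) :
    ∫ x, fderiv ℝ g x x ∂μ = -(finrank ℝ E * ∫ x, g x ∂μ) := by
  have hV (x : E) : HasFDerivAt (fun y => g y • y)
      (g x • ContinuousLinearMap.id ℝ E + (fderiv ℝ g x).smulRight x) x :=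
    (hg x).hasFDerivAt.smul (hasFDerivAt_id x)
  have hV' : Integrable (fun x => fderiv ℝ (fun y => g y • y) x) μ := by
    simp_rw [(hV _).fderiv]
    refine (hg_int.smul_const _).add (hg'.mono' (by fun_prop) (.of_forall fun x => ?_))
    simp only [ContinuousLinearMap.norm_smulRight_apply, le_refl]
  have hdiv := integral_trace_fderiv_eq_zero (fun x => (hV x).differentiableAt) hgx hV'
  simp only [(hV _).fderiv, ContinuousLinearMap.toLinearMap_add,
    ContinuousLinearMap.toLinearMap_smul, ContinuousLinearMap.coe_id,
    ContinuousLinearMap.coe_smulRight, map_add, map_smul, LinearMap.trace_id, smul_eq_mul,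
    LinearMap.trace_smulRight, ContinuousLinearMap.coe_coe] at hdiv
  have hgxx : Integrable (fun x => fderiv ℝ g x x) μ :=
    hg'.mono' (measurable_fderiv_apply_self g).aestronglyMeasurable (.of_forall fun x => by
      simpa only [Real.norm_eq_abs] using (fderiv ℝ g x).le_opNorm x)
  rw [integral_add (hg_int.mul_const _) hgxx, integral_mul_const] at hdiv
  linarith

end Divergence

section NonnegFunction

variable {E : Type*} [NormedAddCommGroup E] [NormedSpace ℝ E] {f : E → ℝ}

theorem fderiv_eq_zero_of_nonneg_of_eq_zero (hpos : ∀ y, 0 ≤ f y) {x : E} (hx : f x = 0) :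
    fderiv ℝ f x = 0 :=
  IsLocalMin.fderiv_eq_zero (.of_forall fun y => hx ▸ hpos y)

theorem norm_fderiv_mul_le (hpos : ∀ y, 0 ≤ f y) (x : E) {c : ℝ} (hc : 0 < c) (t : ℝ) :
    ‖fderiv ℝ f x‖ * t ≤ (2 * c)⁻¹ * (‖fderiv ℝ f x‖ ^ 2 / f x) + c / 2 * (f x * t ^ 2) := by
  rcases (hpos x).eq_or_lt with hx | hx
  -- a zero of `f` is a minimum, so `fderiv ℝ f x = 0` matches the junk value `‖·‖ ^ 2 / 0 = 0`
  · simp [fderiv_eq_zero_of_nonneg_of_eq_zero hpos hx.symm, ← hx]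
  · have key : (2 * c)⁻¹ * (‖fderiv ℝ f x‖ ^ 2 / f x) + c / 2 * (f x * t ^ 2)
        - ‖fderiv ℝ f x‖ * t = (‖fderiv ℝ f x‖ - c * f x * t) ^ 2 / (2 * c * f x) := by
      field_simp
      ring
    nlinarith [div_nonneg (sq_nonneg (‖fderiv ℝ f x‖ - c * f x * t))
      (by positivity : 0 ≤ 2 * c * f x)]

theorem integrable_norm_fderiv_of_fisher [FiniteDimensional ℝ E] [MeasurableSpace E]
    [BorelSpace E] {μ : Measure E} (hpos : ∀ x, 0 ≤ f x) (hint : Integrable f μ)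
    (hI : Integrable (fun x => ‖fderiv ℝ f x‖ ^ 2 / f x) μ) :
    Integrable (fun x => ‖fderiv ℝ f x‖) μ :=
  ((hI.const_mul 2⁻¹).add (hint.const_mul 2⁻¹)).mono' (by fun_prop) (.of_forall fun x => by
    simpa using norm_fderiv_mul_le hpos x one_pos 1)

end NonnegFunction

section Weights

variable {E : Type*} [NormedAddCommGroup E] [MeasurableSpace E] [BorelSpace E] {μ : Measure E}
  {f : E → ℝ} {ε : ℝ}

theorem integrable_div_norm_sq_add_sq (hfc : Continuous f) (hint : Integrable f μ)
    (hε : 0 < ε) : Integrable (fun x => f x / (‖x‖ ^ 2 + ε ^ 2)) μ := by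
  refine (hint.norm.div_const (ε ^ 2)).mono' (Measurable.aestronglyMeasurable (by fun_prop))
    (.of_forall fun x => ?_)
  rw [norm_div, Real.norm_of_nonneg (by positivity : (0 : ℝ) ≤ ‖x‖ ^ 2 + ε ^ 2)]
  exact div_le_div_of_nonneg_left (norm_nonneg _) (by positivity)
    (le_add_of_nonneg_left (sq_nonneg _))

theorem integrable_mul_norm_sq_div_sq (hfc : Continuous f) (hint : Integrable f μ)
    (hε : 0 < ε) : Integrable (fun x => f x * ‖x‖ ^ 2 / (‖x‖ ^ 2 + ε ^ 2) ^ 2) μ := by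
  refine (hint.norm.div_const (ε ^ 2)).mono' (Measurable.aestronglyMeasurable (by fun_prop))
    (.of_forall fun x => ?_)
  have hρ : 0 < ‖x‖ ^ 2 + ε ^ 2 := by positivity
  calc ‖f x * ‖x‖ ^ 2 / (‖x‖ ^ 2 + ε ^ 2) ^ 2‖
      = ‖x‖ ^ 2 / (‖x‖ ^ 2 + ε ^ 2) * (‖f x‖ / (‖x‖ ^ 2 + ε ^ 2)) := by
        simp only [norm_div, norm_mul, norm_pow, norm_norm, Real.norm_of_nonneg hρ.le]
        field_simp
    _ ≤ 1 * (‖f x‖ / ε ^ 2) := by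
        gcongr
        · exact sq_div_sq_add_sq_le_one _ _
        · exact le_add_of_nonneg_left (sq_nonneg _)
    _ = _ := one_mul _

theorem integrable_fderiv_apply_self_div [NormedSpace ℝ E] [FiniteDimensional ℝ E]
    (hgrad : Integrable (fun x => ‖fderiv ℝ f x‖) μ) (hε : 0 < ε) :
    Integrable (fun x => fderiv ℝ f x x / (‖x‖ ^ 2 + ε ^ 2)) μ := by
  refine (hgrad.const_mul (2 * ε)⁻¹).mono'
    ((measurable_fderiv_apply_self f).div (by fun_prop)).aestronglyMeasurable
    (.of_forall fun x => ?_)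
  rw [norm_div, Real.norm_of_nonneg (by positivity : (0 : ℝ) ≤ ‖x‖ ^ 2 + ε ^ 2)]
  calc ‖fderiv ℝ f x x‖ / (‖x‖ ^ 2 + ε ^ 2)
      ≤ ‖fderiv ℝ f x‖ * ‖x‖ / (‖x‖ ^ 2 + ε ^ 2) := by
        gcongr
        exact (fderiv ℝ f x).le_opNorm x
    _ = ‖x‖ / (‖x‖ ^ 2 + ε ^ 2) * ‖fderiv ℝ f x‖ := by ring
    _ ≤ (2 * ε)⁻¹ * ‖fderiv ℝ f x‖ := by
        gcongr
        exact div_sq_add_sq_le hε _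

end Weights

section Hardy

variable {E : Type*} [NormedAddCommGroup E] [InnerProductSpace ℝ E] {f : E → ℝ} {ε : ℝ}

theorem hasFDerivAt_div_norm_sq_add_sq {f' : E →L[ℝ] ℝ} {x : E} (hf : HasFDerivAt f f' x)
    (hε : 0 < ε) :
    HasFDerivAt (fun y => f y / (‖y‖ ^ 2 + ε ^ 2))
      ((‖x‖ ^ 2 + ε ^ 2)⁻¹ • f' - (2 * f x / (‖x‖ ^ 2 + ε ^ 2) ^ 2) • innerSL ℝ x) x := by
  have hρ : ‖x‖ ^ 2 + ε ^ 2 ≠ 0 := by positivity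
  have hinv := (hasFDerivAt_inv hρ).comp x ((hasFDerivAt_id x).norm_sq.add_const (ε ^ 2))
  convert! hinv.smul hf using 1
  · ext y; simp [div_eq_inv_mul]
  · ext v
    simp only [sub_apply, smul_apply, smul_eq_mul,
      coe_innerSL_apply, id_eq, Function.comp_apply, ContinuousLinearMap.comp_id,
      ContinuousLinearMap.comp_smul, add_apply,
      ContinuousLinearMap.smulRight_apply, ContinuousLinearMap.comp_apply,
      ContinuousLinearMap.toSpanSingleton_apply, nsmul_eq_mul, Nat.cast_ofNat]
    field_simp
    ring

variable [FiniteDimensional ℝ E] [MeasurableSpace E] [BorelSpace E] {μ : Measure E}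
  [μ.IsAddHaarMeasure]

theorem integral_fderiv_apply_self_div_norm_sq_add_sq (hf : Differentiable ℝ f)
    (hint : Integrable f μ) (hgrad : Integrable (fun x => ‖fderiv ℝ f x‖) μ) (hε : 0 < ε) :
    ∫ x, fderiv ℝ f x x / (‖x‖ ^ 2 + ε ^ 2) ∂μ
      = 2 * ∫ x, f x * ‖x‖ ^ 2 / (‖x‖ ^ 2 + ε ^ 2) ^ 2 ∂μ
        - finrank ℝ E * ∫ x, f x / (‖x‖ ^ 2 + ε ^ 2) ∂μ := by
  have hfc := hf.continuous
  have hg (x : E) := hasFDerivAt_div_norm_sq_add_sq (hf x).hasFDerivAt hε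
  have hgx : Integrable (fun x => (f x / (‖x‖ ^ 2 + ε ^ 2)) • x) μ := by
    refine (hint.norm.const_mul (2 * ε)⁻¹).mono'
      (Measurable.aestronglyMeasurable (by fun_prop)) (.of_forall fun x => ?_)
    rw [norm_smul, norm_div, Real.norm_of_nonneg (by positivity : (0 : ℝ) ≤ ‖x‖ ^ 2 + ε ^ 2),
      div_mul_eq_mul_div, mul_div_assoc, mul_comm]
    exact mul_le_mul_of_nonneg_right (div_sq_add_sq_le hε _) (norm_nonneg _)
  have hg' : Integrable (fun x => ‖fderiv ℝ (fun y => f y / (‖y‖ ^ 2 + ε ^ 2)) x‖ * ‖x‖) μ := by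
    refine ((hgrad.const_mul (2 * ε)⁻¹).add (hint.norm.const_mul (2 / ε ^ 2))).mono'
      (by fun_prop) (.of_forall fun x => ?_)
    have hρ : 0 < ‖x‖ ^ 2 + ε ^ 2 := by positivity
    rw [(hg x).fderiv, Real.norm_of_nonneg (by positivity)]
    show _ ≤ (2 * ε)⁻¹ * ‖fderiv ℝ f x‖ + 2 / ε ^ 2 * ‖f x‖
    calc ‖(‖x‖ ^ 2 + ε ^ 2)⁻¹ • fderiv ℝ f x
          - (2 * f x / (‖x‖ ^ 2 + ε ^ 2) ^ 2) • innerSL ℝ x‖ * ‖x‖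
        ≤ ((‖x‖ ^ 2 + ε ^ 2)⁻¹ * ‖fderiv ℝ f x‖
            + 2 * ‖f x‖ / (‖x‖ ^ 2 + ε ^ 2) ^ 2 * ‖x‖) * ‖x‖ := by
          gcongr
          refine (norm_sub_le _ _).trans_eq ?_
          simp [norm_smul, innerSL_apply_norm, abs_of_pos hρ]
      _ = ‖x‖ / (‖x‖ ^ 2 + ε ^ 2) * ‖fderiv ℝ f x‖
            + 2 * (‖x‖ ^ 2 / (‖x‖ ^ 2 + ε ^ 2)) * (‖f x‖ / (‖x‖ ^ 2 + ε ^ 2)) := by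
          field_simp
      _ ≤ (2 * ε)⁻¹ * ‖fderiv ℝ f x‖ + 2 * 1 * (‖f x‖ / ε ^ 2) := by
          gcongr
          · exact div_sq_add_sq_le hε _
          · exact sq_div_sq_add_sq_le_one _ _
          · exact le_add_of_nonneg_left (sq_nonneg _)
      _ = _ := by ring
  have euler := integral_fderiv_apply_self (μ := μ) (fun x => (hg x).differentiableAt)
    (integrable_div_norm_sq_add_sq hfc hint hε) hgx hg'
  have hgxx (x : E) : fderiv ℝ (fun y => f y / (‖y‖ ^ 2 + ε ^ 2)) x x
      = fderiv ℝ f x x / (‖x‖ ^ 2 + ε ^ 2) - 2 * (f x * ‖x‖ ^ 2 / (‖x‖ ^ 2 + ε ^ 2) ^ 2) := by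
    rw [(hg x).fderiv]
    simp only [sub_apply, smul_apply, smul_eq_mul,
      coe_innerSL_apply, real_inner_self_eq_norm_sq]
    ring
  simp_rw [hgxx] at euler
  rw [integral_sub (integrable_fderiv_apply_self_div hgrad hε)
    ((integrable_mul_norm_sq_div_sq hfc hint hε).const_mul 2),
    integral_const_mul] at euler
  linarith

theorem integral_div_norm_sq_add_sq_le (hd : 2 < finrank ℝ E) (hf : Differentiable ℝ f)
    (hpos : ∀ x, 0 ≤ f x) (hint : Integrable f μ)
    (hI : Integrable (fun x => ‖fderiv ℝ f x‖ ^ 2 / f x) μ) (hε : 0 < ε) :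
    ∫ x, f x / (‖x‖ ^ 2 + ε ^ 2) ∂μ
      ≤ (((finrank ℝ E : ℝ) - 2) ^ 2)⁻¹ * ∫ x, ‖fderiv ℝ f x‖ ^ 2 / f x ∂μ := by
  set c : ℝ := finrank ℝ E - 2 with hc_def
  have hc : 0 < c := by
    rw [hc_def, sub_pos]
    exact_mod_cast hd
  have hgrad := integrable_norm_fderiv_of_fisher hpos hint hI
  have hint_div := integrable_div_norm_sq_add_sq hf.continuous hint hε
  have hint_radial := integrable_fderiv_apply_self_div hgrad hε
  have hint_weight := integrable_mul_norm_sq_div_sq hf.continuous hint hε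
  have hweight_le (x : E) : f x * ‖x‖ ^ 2 / (‖x‖ ^ 2 + ε ^ 2) ^ 2 ≤ f x / (‖x‖ ^ 2 + ε ^ 2) := by
    rw [show f x * ‖x‖ ^ 2 / (‖x‖ ^ 2 + ε ^ 2) ^ 2
        = ‖x‖ ^ 2 / (‖x‖ ^ 2 + ε ^ 2) * (f x / (‖x‖ ^ 2 + ε ^ 2)) by field_simp]
    exact mul_le_of_le_one_left (div_nonneg (hpos x) (by positivity))
      (sq_div_sq_add_sq_le_one _ _)
  set B := ∫ x, f x / (‖x‖ ^ 2 + ε ^ 2) ∂μ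
  set I := ∫ x, ‖fderiv ℝ f x‖ ^ 2 / f x ∂μ
  have hlower : c * B ≤ -∫ x, fderiv ℝ f x x / (‖x‖ ^ 2 + ε ^ 2) ∂μ := by
    have hweight_int := integral_mono hint_weight hint_div hweight_le
    rw [integral_fderiv_apply_self_div_norm_sq_add_sq hf hint hgrad hε]
    linarith
  have hupper : -∫ x, fderiv ℝ f x x / (‖x‖ ^ 2 + ε ^ 2) ∂μ ≤ (2 * c)⁻¹ * I + c / 2 * B := by
    rw [← integral_neg, ← integral_const_mul, ← integral_const_mul,
      ← integral_add (hI.const_mul _) (hint_div.const_mul _)]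
    refine integral_mono hint_radial.neg ((hI.const_mul _).add (hint_div.const_mul _)) fun x => ?_
    calc -(fderiv ℝ f x x / (‖x‖ ^ 2 + ε ^ 2))
        ≤ ‖fderiv ℝ f x‖ * (‖x‖ / (‖x‖ ^ 2 + ε ^ 2)) := by
          rw [← neg_div, ← mul_div_assoc]
          gcongr
          exact (neg_le_abs _).trans ((fderiv ℝ f x).le_opNorm x)
      _ ≤ (2 * c)⁻¹ * (‖fderiv ℝ f x‖ ^ 2 / f x)
            + c / 2 * (f x * (‖x‖ / (‖x‖ ^ 2 + ε ^ 2)) ^ 2) := norm_fderiv_mul_le hpos x hc _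
      _ ≤ (2 * c)⁻¹ * (‖fderiv ℝ f x‖ ^ 2 / f x) + c / 2 * (f x / (‖x‖ ^ 2 + ε ^ 2)) := by
          gcongr (2 * c)⁻¹ * _ + c / 2 * ?_
          exact (le_of_eq (by rw [div_pow, mul_div_assoc])).trans (hweight_le x)
  have hcB : c / 2 * B ≤ (2 * c)⁻¹ * I := by linarith
  rw [inv_mul_eq_div, le_div_iff₀ (by positivity)]
  calc B * c ^ 2 = 2 * c * (c / 2 * B) := by ring
    _ ≤ 2 * c * ((2 * c)⁻¹ * I) := by gcongr
    _ = I := by field_simp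

theorem integral_div_norm_sq_le (hd : 2 < finrank ℝ E) (hf : Differentiable ℝ f)
    (hpos : ∀ x, 0 ≤ f x) (hint : Integrable f μ)
    (hI : Integrable (fun x => ‖fderiv ℝ f x‖ ^ 2 / f x) μ) :
    ∫ x, f x / ‖x‖ ^ 2 ∂μ
      ≤ (((finrank ℝ E : ℝ) - 2) ^ 2)⁻¹ * ∫ x, ‖fderiv ℝ f x‖ ^ 2 / f x ∂μ := by
  have : Nontrivial E := Module.nontrivial_of_finrank_pos (R := ℝ) (by omega)
  have hε (n : ℕ) : (0 : ℝ) < 1 / (n + 1) := Nat.one_div_pos_of_nat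
  refine integral_le_of_tendsto_of_integral_le
    (g := fun n x => f x / (‖x‖ ^ 2 + (1 / (n + 1 : ℝ)) ^ 2))
    (fun n => .of_forall fun x => div_nonneg (hpos x) (by positivity))
    (fun n => integrable_div_norm_sq_add_sq hf.continuous hint (hε n)) ?_
    (fun n => integral_div_norm_sq_add_sq_le hd hf hpos hint hI (hε n))
  filter_upwards [μ.ae_ne 0] with x hx
  have hρ : ‖x‖ ^ 2 + 0 ^ 2 ≠ 0 := by simpa using hx
  simpa [Pi.div_def] using tendsto_const_nhds.div
    ((tendsto_one_div_add_atTop_nhds_zero_nat.pow 2).const_add (‖x‖ ^ 2)) hρ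

end Hardy

theorem stmt_9_general {d : ℕ} (hd : 3 ≤ d) (f : EuclideanSpace ℝ (Fin d) → ℝ)
    (hpos : ∀ x, 0 ≤ f x) (hmass : (∫ x, f x) = 1)
    (hdiff : Differentiable ℝ f)
    (hI : Integrable (fun x => ‖gradient f x‖ ^ 2 / f x)) :
    ∫ y, f y / ‖y‖ ^ 2 ≤ (((d : ℝ) - 2) ^ 2)⁻¹ * ∫ x, ‖gradient f x‖ ^ 2 / f x := by
  have hint : Integrable f := .of_integral_ne_zero (by rw [hmass]; exact one_ne_zero)
  have hnorm (x : EuclideanSpace ℝ (Fin d)) : ‖gradient f x‖ = ‖fderiv ℝ f x‖ := by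
    rw [← toDual_gradient, LinearIsometryEquiv.norm_map]
  simp_rw [hnorm] at hI ⊢
  have hdim : 2 < finrank ℝ (EuclideanSpace ℝ (Fin d)) := by
    rw [finrank_euclideanSpace_fin]
    omega
  simpa only [finrank_euclideanSpace_fin] using
    integral_div_norm_sq_le hdim hdiff hpos hint hI

/-- Hardy-type inequality: for `d ≥ 3` and a probability density `f` on `ℝ^d` with finite
Fisher information `I(f)`, one has `∫ |y|^{-2} f(y) dy ≤ (d-2)^{-2} I(f)`. -/
theorem stmt_9 {d : ℕ} (hd : 3 ≤ d) (f : EuclideanSpace ℝ (Fin d) → ℝ)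
    (hmeas : Measurable f) (hpos : ∀ x, 0 ≤ f x) (hmass : (∫ x, f x) = 1)
    (hdiff : Differentiable ℝ f)
    (hI : Integrable (fun x => ‖gradient f x‖ ^ 2 / f x)) :
    ∫ y, f y / ‖y‖ ^ 2 ≤ (((d : ℝ) - 2) ^ 2)⁻¹ * ∫ x, ‖gradient f x‖ ^ 2 / f x :=
  stmt_9_general hd f hpos hmass hdiff hI
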